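/- arXiv:2303.09329 — 8 statements merged into one kernel-verified Lean document; each statement's English description precedes it below -/
import Mathlib

section
/- Let a,b,d,f,c be complex numbers with Δ = |af| - |bd| ≠ 0. Define K₁ = ((|b|+|f|)/|Δ|)², K₂ = ((|a|+|d|)/|Δ|)², M₁ = K₁ + √(K₁(K₁+|c|)), M₂ = K₂ + √(K₂(K₂+|c|)), and let M > max(M₁, M₂). If z₁, z₂ ∈ ℂ satisfy |z₁| > M or |z₂| > M, then the next iterates w₁ = (a z₁ + b z₂)² + c and w₂ = (d z₁ + f z₂)² + c satisfy |w₁| > 2M or |w₂| > 2M. -/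
open Complex

lemma aux_quad (k Mc M s : ℝ) (hk : 0 < k) (hc : 0 ≤ Mc)
    (hM : M > k^2 + Real.sqrt (k^2*(k^2+Mc))) (hs : M < s * k) :
    s^2 > 2*M + Mc := by
  have hsq := Real.sq_sqrt (by positivity : (0:ℝ) ≤ k^2*(k^2+Mc))
  have hnn := Real.sqrt_nonneg (k^2*(k^2+Mc))
  have hM0 : 0 < M := by nlinarith
  have hs0 : 0 < s := by nlinarith
  have h2 : s^2 * k^2 > M^2 := by nlinarith
  nlinarith [sq_nonneg (M - k^2 - Real.sqrt (k^2*(k^2+Mc)))]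

lemma aux_abs (w c : ℂ) (M : ℝ)
    (h : (‖w‖)^2 > 2*M + ‖c‖) :
    ‖w^2 + c‖ > 2*M := by
  have h1 : ‖w^2‖ ≤ ‖w^2+c‖ + ‖c‖ := by
    calc ‖w^2‖ = ‖(w^2+c) + (-c)‖ := by ring_nf
    _ ≤ ‖w^2+c‖ + ‖-c‖ := norm_add_le _ _
    _ = ‖w^2+c‖ + ‖c‖ := by rw [norm_neg]
  rw [norm_pow] at h1
  linarith

theorem stmt0 (a b d f c : ℂ)
    (Δ : ℝ) (hΔdef : Δ = ‖a*f‖ - ‖b*d‖) (hΔ : Δ ≠ 0)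
    (K₁ K₂ M₁ M₂ M : ℝ)
    (hK₁ : K₁ = ((‖b‖ + ‖f‖) / |Δ|)^2)
    (hK₂ : K₂ = ((‖a‖ + ‖d‖) / |Δ|)^2)
    (hM₁ : M₁ = K₁ + Real.sqrt (K₁ * (K₁ + ‖c‖)))
    (hM₂ : M₂ = K₂ + Real.sqrt (K₂ * (K₂ + ‖c‖)))
    (hM : M > max M₁ M₂)
    (z₁ z₂ : ℂ) (h : ‖z₁‖ > M ∨ ‖z₂‖ > M) :
    ‖(a*z₁ + b*z₂)^2 + c‖ > 2*M ∨
    ‖(d*z₁ + f*z₂)^2 + c‖ > 2*M := by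
  set u := a*z₁ + b*z₂ with hu
  set v := d*z₁ + f*z₂ with hv
  have hΔa : (0:ℝ) < |Δ| := abs_pos.mpr hΔ
  have hc0 : (0:ℝ) ≤ ‖c‖ := norm_nonneg c
  have hDge : |Δ| ≤ ‖a*f - b*d‖ := by
    rw [hΔdef]
    exact abs_norm_sub_norm_le _ _
  have hM1 : M > M₁ := lt_of_le_of_lt (le_max_left _ _) hM
  have hM2 : M > M₂ := lt_of_le_of_lt (le_max_right _ _) hM
  rcases h with h | h
  · -- use z₁, coupling with b,f
    have hbf : 0 < ‖b‖ + ‖f‖ := by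
      rcases (lt_or_eq_of_le (by positivity : (0:ℝ) ≤ ‖b‖ + ‖f‖)) with h' | h'
      · exact h'
      · exfalso
        have hb : b = 0 := by
          have := norm_nonneg b
          have := norm_nonneg f
          have : ‖b‖ = 0 := by linarith
          simpa using this
        have hf : f = 0 := by
          have := norm_nonneg b
          have := norm_nonneg f
          have : ‖f‖ = 0 := by linarith
          simpa using this
        apply hΔ
        rw [hΔdef, hb, hf]
        simp
    have hid : (a*f - b*d) * z₁ = f*u - b*v := by rw [hu, hv]; ring
    have key : |Δ| * M < (‖b‖ + ‖f‖) * max (‖u‖) (‖v‖) := by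
      calc |Δ| * M < |Δ| * ‖z₁‖ := by
            exact mul_lt_mul_of_pos_left h hΔa
        _ ≤ ‖a*f - b*d‖ * ‖z₁‖ :=
            mul_le_mul_of_nonneg_right hDge (norm_nonneg _)
        _ = ‖(a*f - b*d) * z₁‖ := (norm_mul _ _).symm
        _ = ‖f*u - b*v‖ := by rw [hid]
        _ ≤ ‖f*u‖ + ‖b*v‖ := norm_sub_le _ _
        _ = ‖f‖ * ‖u‖ + ‖b‖ * ‖v‖ := by
            rw [norm_mul, norm_mul]
        _ ≤ ‖f‖ * max (‖u‖) (‖v‖)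
            + ‖b‖ * max (‖u‖) (‖v‖) := by
            gcongr
            · exact le_max_left _ _
            · exact le_max_right _ _
        _ = (‖b‖ + ‖f‖) * max (‖u‖) (‖v‖) := by ring
    set k : ℝ := (‖b‖ + ‖f‖) / |Δ| with hk
    have hkpos : 0 < k := div_pos hbf hΔa
    have hK₁' : K₁ = k^2 := hK₁
    have hMk : M > k^2 + Real.sqrt (k^2 * (k^2 + ‖c‖)) := by
      rw [← hK₁']; rw [hM₁] at hM1; exact hM1
    have hquad := aux_quad k (‖c‖) M (max (‖u‖) (‖v‖)) hkpos hc0 hMk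
      (by
        have : M * |Δ| < max (‖u‖) (‖v‖) * (‖b‖ + ‖f‖) := by
          calc M * |Δ| = |Δ| * M := by ring
            _ < (‖b‖ + ‖f‖) * max (‖u‖) (‖v‖) := key
            _ = _ := by ring
        rw [hk, mul_div_assoc', lt_div_iff₀ hΔa]
        linarith)
    rcases le_max_iff.mp (le_refl (max (‖u‖) (‖v‖))) with hmax | hmax
    · left
      apply aux_abs
      have : max (‖u‖) (‖v‖) ≤ ‖u‖ := hmax
      have hle : (max (‖u‖) (‖v‖))^2 ≤ (‖u‖)^2 := by
        apply pow_le_pow_left₀ (le_max_of_le_left (norm_nonneg u)) this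
      linarith
    · right
      apply aux_abs
      have hle : (max (‖u‖) (‖v‖))^2 ≤ (‖v‖)^2 := by
        apply pow_le_pow_left₀ (le_max_of_le_left (norm_nonneg u)) hmax
      linarith
  · -- use z₂, coupling with a,d
    have had : 0 < ‖a‖ + ‖d‖ := by
      rcases (lt_or_eq_of_le (by positivity : (0:ℝ) ≤ ‖a‖ + ‖d‖)) with h' | h'
      · exact h'
      · exfalso
        have ha : a = 0 := by
          have := norm_nonneg a
          have := norm_nonneg d
          have : ‖a‖ = 0 := by linarith
          simpa using this
        have hd : d = 0 := by
          have := norm_nonneg a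
          have := norm_nonneg d
          have : ‖d‖ = 0 := by linarith
          simpa using this
        apply hΔ
        rw [hΔdef, ha, hd]
        simp
    have hid : (a*f - b*d) * z₂ = a*v - d*u := by rw [hu, hv]; ring
    have key : |Δ| * M < (‖a‖ + ‖d‖) * max (‖u‖) (‖v‖) := by
      calc |Δ| * M < |Δ| * ‖z₂‖ := by
            exact mul_lt_mul_of_pos_left h hΔa
        _ ≤ ‖a*f - b*d‖ * ‖z₂‖ :=
            mul_le_mul_of_nonneg_right hDge (norm_nonneg _)
        _ = ‖(a*f - b*d) * z₂‖ := (norm_mul _ _).symm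
        _ = ‖a*v - d*u‖ := by rw [hid]
        _ ≤ ‖a*v‖ + ‖d*u‖ := norm_sub_le _ _
        _ = ‖a‖ * ‖v‖ + ‖d‖ * ‖u‖ := by
            rw [norm_mul, norm_mul]
        _ ≤ ‖a‖ * max (‖u‖) (‖v‖)
            + ‖d‖ * max (‖u‖) (‖v‖) := by
            gcongr
            · exact le_max_right _ _
            · exact le_max_left _ _
        _ = (‖a‖ + ‖d‖) * max (‖u‖) (‖v‖) := by ring
    set k : ℝ := (‖a‖ + ‖d‖) / |Δ| with hk
    have hkpos : 0 < k := div_pos had hΔa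
    have hK₂' : K₂ = k^2 := hK₂
    have hMk : M > k^2 + Real.sqrt (k^2 * (k^2 + ‖c‖)) := by
      rw [← hK₂']; rw [hM₂] at hM2; exact hM2
    have hquad := aux_quad k (‖c‖) M (max (‖u‖) (‖v‖)) hkpos hc0 hMk
      (by
        have : M * |Δ| < max (‖u‖) (‖v‖) * (‖a‖ + ‖d‖) := by
          calc M * |Δ| = |Δ| * M := by ring
            _ < (‖a‖ + ‖d‖) * max (‖u‖) (‖v‖) := key
            _ = _ := by ring
        rw [hk, mul_div_assoc', lt_div_iff₀ hΔa]
        linarith)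
    rcases le_max_iff.mp (le_refl (max (‖u‖) (‖v‖))) with hmax | hmax
    · left
      apply aux_abs
      have hle : (max (‖u‖) (‖v‖))^2 ≤ (‖u‖)^2 := by
        apply pow_le_pow_left₀ (le_max_of_le_left (norm_nonneg u)) hmax
      linarith
    · right
      apply aux_abs
      have hle : (max (‖u‖) (‖v‖))^2 ≤ (‖v‖)^2 := by
        apply pow_le_pow_left₀ (le_max_of_le_left (norm_nonneg u)) hmax
      linarith
end

section
/- Let a,b,d,f,c ∈ ℂ with Δ = |af| - |bd| ≠ 0, and let M = max(M₁,M₂) with M₁, M₂ as defined from K₁ = ((|b|+|f|)/|Δ|)² and K₂ = ((|a|+|d|)/|Δ|)² via Mᵢ = Kᵢ + √(Kᵢ(Kᵢ+|c|)). Then for any orbit (z₁(n), z₂(n)) of the coupled system, if |z₁(N)| > M or |z₂(N)| > M for some N, then max(|z₁(n)|, |z₂(n)|) → ∞ as n → ∞; in particular, for all n ≥ N, max(|z₁(n)|, |z₂(n)|) > 2^{n-N} M. -/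
open Complex Filter

private lemma quadlem (K cc w Mi : ℝ) (hK : 0 < K) (hc : 0 ≤ cc)
    (hMi : Mi = K + Real.sqrt (K * (K + cc))) (hw : Mi < w) :
    K * (2 * w + cc) < w ^ 2 := by
  set s := Real.sqrt (K * (K + cc)) with hs
  have hs2 : s ^ 2 = K * (K + cc) := Real.sq_sqrt (by positivity)
  have hs0 : 0 ≤ s := Real.sqrt_nonneg _
  have h1 : 0 < w - K - s := by rw [hMi] at hw; linarith
  have h2 : 0 < w - K + s := by linarith
  nlinarith [mul_pos h1 h2]

theorem stmt1 (a b d f c : ℂ)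
    (Δ : ℝ) (hΔdef : Δ = ‖a*f‖ - ‖b*d‖) (hΔ : Δ ≠ 0)
    (K₁ K₂ M₁ M₂ M : ℝ)
    (hK₁ : K₁ = ((‖b‖ + ‖f‖) / |Δ|)^2)
    (hK₂ : K₂ = ((‖a‖ + ‖d‖) / |Δ|)^2)
    (hM₁ : M₁ = K₁ + Real.sqrt (K₁ * (K₁ + ‖c‖)))
    (hM₂ : M₂ = K₂ + Real.sqrt (K₂ * (K₂ + ‖c‖)))
    (hM : M = max M₁ M₂)
    (z₁ z₂ : ℕ → ℂ)
    (h₁ : ∀ n, z₁ (n+1) = (a * z₁ n + b * z₂ n)^2 + c)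
    (h₂ : ∀ n, z₂ (n+1) = (d * z₁ n + f * z₂ n)^2 + c)
    (N : ℕ) (hN : ‖z₁ N‖ > M ∨ ‖z₂ N‖ > M) :
    Tendsto (fun n => max (‖z₁ n‖) (‖z₂ n‖)) atTop atTop ∧
    ∀ n ≥ N, max (‖z₁ n‖) (‖z₂ n‖) > 2^(n - N) * M := by
  have hΔabs : 0 < |Δ| := abs_pos.mpr hΔ
  -- denominators positive
  have hbf : 0 < ‖b‖ + ‖f‖ := by
    by_contra h
    push_neg at h
    have hb : ‖b‖ = 0 := le_antisymm (by nlinarith [norm_nonneg b, norm_nonneg f]) (norm_nonneg b)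
    have hf : ‖f‖ = 0 := le_antisymm (by nlinarith [norm_nonneg b, norm_nonneg f]) (norm_nonneg f)
    have hb0 : b = 0 := by simpa using hb
    have hf0 : f = 0 := by simpa using hf
    apply hΔ
    rw [hΔdef, hb0, hf0]
    simp
  have had : 0 < ‖a‖ + ‖d‖ := by
    by_contra h
    push_neg at h
    have ha : ‖a‖ = 0 := le_antisymm (by nlinarith [norm_nonneg a, norm_nonneg d]) (norm_nonneg a)
    have hd : ‖d‖ = 0 := le_antisymm (by nlinarith [norm_nonneg a, norm_nonneg d]) (norm_nonneg d)
    have ha0 : a = 0 := by simpa using ha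
    have hd0 : d = 0 := by simpa using hd
    apply hΔ
    rw [hΔdef, ha0, hd0]
    simp
  have hK₁pos : 0 < K₁ := by rw [hK₁]; exact pow_pos (div_pos hbf hΔabs) 2
  have hK₂pos : 0 < K₂ := by rw [hK₂]; exact pow_pos (div_pos had hΔabs) 2
  have hM₁pos : 0 < M₁ := by
    rw [hM₁]; have := Real.sqrt_nonneg (K₁ * (K₁ + ‖c‖)); linarith
  have hM₂pos : 0 < M₂ := by
    rw [hM₂]; have := Real.sqrt_nonneg (K₂ * (K₂ + ‖c‖)); linarith
  have hMpos : 0 < M := by rw [hM]; exact lt_max_of_lt_left hM₁pos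
  have hM₁le : M₁ ≤ M := by rw [hM]; exact le_max_left _ _
  have hM₂le : M₂ ≤ M := by rw [hM]; exact le_max_right _ _
  have hcnn : (0:ℝ) ≤ ‖c‖ := norm_nonneg c
  -- key one-step escape lemma
  have key : ∀ n, M < max (‖z₁ n‖) (‖z₂ n‖) →
      2 * max (‖z₁ n‖) (‖z₂ n‖) <
        max (‖z₁ (n+1)‖) (‖z₂ (n+1)‖) := by
    intro n hn
    set u := a * z₁ n + b * z₂ n with hu
    set v := d * z₁ n + f * z₂ n with hv
    set W := max (‖u‖) (‖v‖) with hW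
    have hW0 : 0 ≤ W := le_trans (norm_nonneg u) (le_max_left _ _)
    have hΔle : |Δ| ≤ ‖a*f - b*d‖ := by
      have h := abs_norm_sub_norm_le (a*f) (b*d)
      rw [hΔdef]
      simpa using h
    -- bound |Δ| * |z₁ n| ≤ (|b|+|f|) * W
    have hWz1 : |Δ| * ‖z₁ n‖ ≤ (‖b‖ + ‖f‖) * W := by
      have hid : (a*f - b*d) * z₁ n = f * u - b * v := by rw [hu, hv]; ring
      calc |Δ| * ‖z₁ n‖
          ≤ ‖a*f - b*d‖ * ‖z₁ n‖ :=
            mul_le_mul_of_nonneg_right hΔle (norm_nonneg _)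
        _ = ‖(a*f - b*d) * z₁ n‖ := (norm_mul _ _).symm
        _ = ‖f * u - b * v‖ := by rw [hid]
        _ ≤ ‖f * u‖ + ‖b * v‖ := by
            simpa using norm_sub_le (f*u) (b*v)
        _ = ‖f‖ * ‖u‖ + ‖b‖ * ‖v‖ := by
            rw [norm_mul, norm_mul]
        _ ≤ ‖f‖ * W + ‖b‖ * W := by
            gcongr
            · exact le_max_left _ _
            · exact le_max_right _ _
        _ = (‖b‖ + ‖f‖) * W := by ring
    have hWz2 : |Δ| * ‖z₂ n‖ ≤ (‖a‖ + ‖d‖) * W := by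
      have hid : (a*f - b*d) * z₂ n = a * v - d * u := by rw [hu, hv]; ring
      calc |Δ| * ‖z₂ n‖
          ≤ ‖a*f - b*d‖ * ‖z₂ n‖ :=
            mul_le_mul_of_nonneg_right hΔle (norm_nonneg _)
        _ = ‖(a*f - b*d) * z₂ n‖ := (norm_mul _ _).symm
        _ = ‖a * v - d * u‖ := by rw [hid]
        _ ≤ ‖a * v‖ + ‖d * u‖ := by
            simpa using norm_sub_le (a*v) (d*u)
        _ = ‖a‖ * ‖v‖ + ‖d‖ * ‖u‖ := by
            rw [norm_mul, norm_mul]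
        _ ≤ ‖a‖ * W + ‖d‖ * W := by
            gcongr
            · exact le_max_right _ _
            · exact le_max_left _ _
        _ = (‖a‖ + ‖d‖) * W := by ring
    -- next step lower bounds
    have hn1 : ‖u‖ ^ 2 - ‖c‖ ≤ ‖z₁ (n+1)‖ := by
      rw [h₁ n, ← hu]
      have e : (u^2 + c) - c = u^2 := add_sub_cancel_right _ _
      have h := norm_sub_le (u^2 + c) c
      rw [e] at h
      simp only [norm_pow] at h
      linarith
    have hn2 : ‖v‖ ^ 2 - ‖c‖ ≤ ‖z₂ (n+1)‖ := by
      rw [h₂ n, ← hv]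
      have e : (v^2 + c) - c = v^2 := add_sub_cancel_right _ _
      have h := norm_sub_le (v^2 + c) c
      rw [e] at h
      simp only [norm_pow] at h
      linarith
    have hnext : W ^ 2 - ‖c‖ ≤
        max (‖z₁ (n+1)‖) (‖z₂ (n+1)‖) := by
      rcases max_choice (‖u‖) (‖v‖) with h | h
      · rw [hW, h]
        exact le_trans hn1 (le_max_left _ _)
      · rw [hW, h]
        exact le_trans hn2 (le_max_right _ _)
    set w := max (‖z₁ n‖) (‖z₂ n‖) with hw
    have hwpos : 0 < w := lt_trans hMpos hn
    have hΔsq : |Δ|^2 = Δ^2 := _root_.sq_abs Δ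
    have hΔ2 : 0 < Δ^2 := by positivity
    have hfinal : 2 * w + ‖c‖ < W ^ 2 := by
      rcases max_choice (‖z₁ n‖) (‖z₂ n‖) with h | h
      · -- w = |z₁ n|, use K₁
        have hb : |Δ| * w ≤ (‖b‖ + ‖f‖) * W := by rw [hw, h]; exact hWz1
        have hK1Δ : K₁ * Δ^2 = (‖b‖ + ‖f‖)^2 := by
          rw [hK₁, div_pow, _root_.sq_abs, div_mul_cancel₀]
          exact pow_ne_zero 2 hΔ
        have hsq : (|Δ| * w)^2 ≤ ((‖b‖ + ‖f‖) * W)^2 :=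
          pow_le_pow_left₀ (by positivity) hb 2
        have h1 : w ^ 2 ≤ K₁ * W ^ 2 := by
          have e1 : (|Δ| * w)^2 = Δ^2 * w^2 := by rw [mul_pow, hΔsq]
          have e2 : ((‖b‖ + ‖f‖) * W)^2 = Δ^2 * (K₁ * W^2) := by
            rw [mul_pow, ← hK1Δ]; ring
          rw [e1, e2] at hsq
          exact le_of_mul_le_mul_left hsq hΔ2
        have h2 : K₁ * (2 * w + ‖c‖) < w ^ 2 :=
          quadlem K₁ (‖c‖) w M₁ hK₁pos hcnn hM₁ (lt_of_le_of_lt hM₁le hn)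
        have h3 : K₁ * (2 * w + ‖c‖) < K₁ * W ^ 2 := lt_of_lt_of_le h2 h1
        exact (mul_lt_mul_iff_right₀ hK₁pos).mp h3
      · have hb : |Δ| * w ≤ (‖a‖ + ‖d‖) * W := by rw [hw, h]; exact hWz2
        have hK2Δ : K₂ * Δ^2 = (‖a‖ + ‖d‖)^2 := by
          rw [hK₂, div_pow, _root_.sq_abs, div_mul_cancel₀]
          exact pow_ne_zero 2 hΔ
        have hsq : (|Δ| * w)^2 ≤ ((‖a‖ + ‖d‖) * W)^2 :=
          pow_le_pow_left₀ (by positivity) hb 2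
        have h1 : w ^ 2 ≤ K₂ * W ^ 2 := by
          have e1 : (|Δ| * w)^2 = Δ^2 * w^2 := by rw [mul_pow, hΔsq]
          have e2 : ((‖a‖ + ‖d‖) * W)^2 = Δ^2 * (K₂ * W^2) := by
            rw [mul_pow, ← hK2Δ]; ring
          rw [e1, e2] at hsq
          exact le_of_mul_le_mul_left hsq hΔ2
        have h2 : K₂ * (2 * w + ‖c‖) < w ^ 2 :=
          quadlem K₂ (‖c‖) w M₂ hK₂pos hcnn hM₂ (lt_of_le_of_lt hM₂le hn)
        have h3 : K₂ * (2 * w + ‖c‖) < K₂ * W ^ 2 := lt_of_lt_of_le h2 h1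
        exact (mul_lt_mul_iff_right₀ hK₂pos).mp h3
    linarith
  -- growth by induction
  have hstep : ∀ k : ℕ, 2^k * M < max (‖z₁ (N+k)‖) (‖z₂ (N+k)‖) := by
    intro k
    induction k with
    | zero =>
        simp only [Nat.add_zero, pow_zero, one_mul]
        rcases hN with h | h
        · exact lt_max_of_lt_left h
        · exact lt_max_of_lt_right h
    | succ k ih =>
        have h1 : (1:ℝ) ≤ 2^k := one_le_pow₀ (by norm_num : (1:ℝ) ≤ 2)
        have hMlt : M < max (‖z₁ (N+k)‖) (‖z₂ (N+k)‖) :=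
          lt_of_le_of_lt (le_mul_of_one_le_left hMpos.le h1) ih
        have h2 := key (N+k) hMlt
        have heq : N + (k+1) = (N+k) + 1 := rfl
        rw [heq]
        calc (2:ℝ)^(k+1) * M = 2 * (2^k * M) := by ring
          _ < 2 * max (‖z₁ (N+k)‖) (‖z₂ (N+k)‖) := by linarith
          _ < _ := h2
  have hgrow : ∀ n ≥ N, max (‖z₁ n‖) (‖z₂ n‖) > 2^(n-N) * M := by
    intro n hn
    obtain ⟨k, rfl⟩ := Nat.exists_eq_add_of_le hn
    simpa [Nat.add_sub_cancel_left] using hstep k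
  refine ⟨?_, hgrow⟩
  have htend : Tendsto (fun n : ℕ => (2:ℝ)^(n-N) * M) atTop atTop := by
    apply Tendsto.atTop_mul_const hMpos
    exact (tendsto_pow_atTop_atTop_of_one_lt (by norm_num : (1:ℝ) < 2)).comp
      (tendsto_sub_atTop_nat N)
  exact tendsto_atTop_mono' atTop
    (eventually_atTop.mpr ⟨N, fun n hn => (hgrow n hn).le⟩) htend
end

section
/- Consider the coupled system z₁(n+1) = (a z₁(n) + b z₂(n))² + c, z₂(n+1) = (d z₁(n) + f z₂(n))² + c with b ≠ 0. If the sequence z₁(n) is bounded, i.e., there exists M > 0 with |z₁(n)| ≤ M for all n ≥ 0, then the sequence z₂(n) is also bounded: |z₂(n)| ≤ (√(M + |c|) + |a| M)/|b| for all n ≥ 0. -/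
open Complex

theorem stmt5 (a b d f c : ℂ) (hb : b ≠ 0) (z₁ z₂ : ℕ → ℂ)
    (h₁ : ∀ n, z₁ (n+1) = (a * z₁ n + b * z₂ n)^2 + c)
    (h₂ : ∀ n, z₂ (n+1) = (d * z₁ n + f * z₂ n)^2 + c)
    (M : ℝ) (hM : M > 0) (hbound : ∀ n, ‖z₁ n‖ ≤ M) :
    ∀ n, ‖z₂ n‖ ≤
      (Real.sqrt (M + ‖c‖) + ‖a‖ * M) / ‖b‖ := by
  intro n
  have hb' : (0:ℝ) < ‖b‖ := by
    simpa [norm_pos_iff] using hb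
  rw [le_div_iff₀ hb']
  have hsq : (a * z₁ n + b * z₂ n)^2 = z₁ (n+1) - c := by
    rw [h₁ n]; ring
  have h1 : (‖a * z₁ n + b * z₂ n‖)^2 ≤ M + ‖c‖ := by
    rw [← norm_pow, hsq]
    calc ‖z₁ (n+1) - c‖ ≤ ‖z₁ (n+1)‖ + ‖c‖ :=
          norm_sub_le _ _
      _ ≤ M + ‖c‖ := by linarith [hbound (n+1)]
  have h2 : ‖a * z₁ n + b * z₂ n‖ ≤ Real.sqrt (M + ‖c‖) := by
    have := Real.sqrt_le_sqrt h1
    rwa [Real.sqrt_sq (norm_nonneg _)] at this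
  have h3 : ‖b * z₂ n‖ ≤ Real.sqrt (M + ‖c‖) + ‖a‖ * M := by
    have : b * z₂ n = (a * z₁ n + b * z₂ n) - a * z₁ n := by ring
    rw [this]
    calc ‖(a * z₁ n + b * z₂ n) - a * z₁ n‖
        ≤ ‖a * z₁ n + b * z₂ n‖ + ‖a * z₁ n‖ :=
          norm_sub_le _ _
      _ ≤ Real.sqrt (M + ‖c‖) + ‖a‖ * M := by
          have := hbound n
          have h4 : ‖a * z₁ n‖ ≤ ‖a‖ * M := by
            rw [norm_mul]
            exact mul_le_mul_of_nonneg_left this (norm_nonneg a)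
          linarith
  calc ‖z₂ n‖ * ‖b‖ = ‖b * z₂ n‖ := by
        rw [norm_mul, mul_comm]
    _ ≤ _ := h3
end

section
/- Consider the coupled system z₁(n+1) = (a z₁(n) + b z₂(n))² + c, z₂(n+1) = (d z₁(n) + f z₂(n))² + c with b ≠ 0 and d ≠ 0. Then the sequence z₁(n) is bounded if and only if the sequence z₂(n) is bounded. -/
open Complex

lemma aux6 (a b c : ℂ) (hb : b ≠ 0) (z₁ z₂ : ℕ → ℂ)
    (h₁ : ∀ n, z₁ (n+1) = (a * z₁ n + b * z₂ n)^2 + c)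
    (B : ℝ) (hB : ∀ n, ‖z₁ n‖ ≤ B) :
    ∃ C : ℝ, ∀ n, ‖z₂ n‖ ≤ C := by
  refine ⟨(‖a‖ * B + Real.sqrt (B + ‖c‖)) / ‖b‖, fun n => ?_⟩
  have hsq : ‖(a * z₁ n + b * z₂ n)^2‖ ≤ B + ‖c‖ := by
    have : (a * z₁ n + b * z₂ n)^2 = z₁ (n+1) - c := by rw [h₁ n]; ring
    rw [this]
    calc ‖z₁ (n+1) - c‖ ≤ ‖z₁ (n+1)‖ + ‖c‖ :=
          norm_sub_le _ _
      _ ≤ B + ‖c‖ := by linarith [hB (n+1)]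
  have hw : ‖a * z₁ n + b * z₂ n‖ ≤ Real.sqrt (B + ‖c‖) := by
    rw [norm_pow] at hsq
    have h0 : (0:ℝ) ≤ ‖a * z₁ n + b * z₂ n‖ := norm_nonneg _
    nlinarith [Real.sq_sqrt (le_trans (by positivity) hsq),
      Real.sqrt_nonneg (B + ‖c‖)]
  have hbz : ‖b * z₂ n‖ ≤ ‖a‖ * B + Real.sqrt (B + ‖c‖) := by
    have : b * z₂ n = (a * z₁ n + b * z₂ n) - a * z₁ n := by ring
    rw [this]
    calc ‖(a * z₁ n + b * z₂ n) - a * z₁ n‖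
        ≤ ‖a * z₁ n + b * z₂ n‖ + ‖a * z₁ n‖ :=
          norm_sub_le _ _
      _ ≤ Real.sqrt (B + ‖c‖) + ‖a‖ * B := by
          rw [norm_mul]
          have := mul_le_mul_of_nonneg_left (hB n) (norm_nonneg a)
          linarith
      _ = ‖a‖ * B + Real.sqrt (B + ‖c‖) := by ring
  rw [norm_mul] at hbz
  have hbpos : (0:ℝ) < ‖b‖ := by simpa [norm_pos_iff] using hb
  rw [le_div_iff₀ hbpos]
  linarith

theorem stmt6 (a b d f c : ℂ) (hb : b ≠ 0) (hd : d ≠ 0) (z₁ z₂ : ℕ → ℂ)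
    (h₁ : ∀ n, z₁ (n+1) = (a * z₁ n + b * z₂ n)^2 + c)
    (h₂ : ∀ n, z₂ (n+1) = (d * z₁ n + f * z₂ n)^2 + c) :
    (∃ B : ℝ, ∀ n, ‖z₁ n‖ ≤ B) ↔
    (∃ B : ℝ, ∀ n, ‖z₂ n‖ ≤ B) := by
  constructor
  · rintro ⟨B, hB⟩
    exact aux6 a b c hb z₁ z₂ h₁ B hB
  · rintro ⟨B, hB⟩
    exact aux6 f d c hd z₂ z₁ (fun n => by rw [h₂ n]; ring_nf) B hB
end

section
/- Consider the system z₁(n+1) = (b z₂(n))² + c, z₂(n+1) = (f z₂(n))² + c with f ≠ 0 (the case a = d = 0 of the coupled quadratic system). Then the critical orbit starting at (z₁(0), z₂(0)) = (0,0) is bounded if and only if f² c lies in the Mandelbrot set. -/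
open Complex

/-- The critical orbit of w ↦ w² + c. -/
def mandelbrotOrbit (c : ℂ) : ℕ → ℂ
  | 0 => 0
  | n+1 => (mandelbrotOrbit c n)^2 + c

/-- The Mandelbrot set: parameters with bounded critical orbit. -/
def mandelbrotSet : Set ℂ :=
  {c | ∃ B : ℝ, ∀ n, ‖mandelbrotOrbit c n‖ ≤ B}

theorem stmt8 (b f c : ℂ) (hf : f ≠ 0) (z₁ z₂ : ℕ → ℂ)
    (h₁0 : z₁ 0 = 0) (h₂0 : z₂ 0 = 0)
    (h₁ : ∀ n, z₁ (n+1) = (b * z₂ n)^2 + c)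
    (h₂ : ∀ n, z₂ (n+1) = (f * z₂ n)^2 + c) :
    (∃ B : ℝ, ∀ n, ‖z₁ n‖ ≤ B ∧ ‖z₂ n‖ ≤ B) ↔
    f^2 * c ∈ mandelbrotSet := by
  have key : ∀ n, mandelbrotOrbit (f^2 * c) n = f^2 * z₂ n := by
    intro n
    induction n with
    | zero => simp [mandelbrotOrbit, h₂0]
    | succ n ih =>
      rw [mandelbrotOrbit, ih, h₂ n]
      ring
  have hf2 : (0:ℝ) < ‖f^2‖ := by
    simpa using (norm_pos_iff.mpr (pow_ne_zero 2 hf))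
  constructor
  · rintro ⟨B, hB⟩
    refine ⟨‖f^2‖ * B, fun n => ?_⟩
    rw [key n, norm_mul]
    exact mul_le_mul_of_nonneg_left (hB n).2 (le_of_lt hf2)
  · rintro ⟨B, hB⟩
    have hz₂ : ∀ n, ‖z₂ n‖ ≤ B / ‖f^2‖ := by
      intro n
      rw [le_div_iff₀ hf2, mul_comm]
      calc ‖f^2‖ * ‖z₂ n‖
          = ‖mandelbrotOrbit (f^2*c) n‖ := by rw [key n, norm_mul]
        _ ≤ B := hB n
    set D : ℝ := B / ‖f^2‖ with hD
    have hD0 : 0 ≤ D := le_trans (norm_nonneg _) (hz₂ 0)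
    refine ⟨max D ((‖b‖ * D)^2 + ‖c‖), fun n => ?_⟩
    constructor
    · refine le_max_of_le_right ?_
      cases n with
      | zero =>
        rw [h₁0]
        simp
        positivity
      | succ n =>
        rw [h₁ n]
        calc ‖(b * z₂ n)^2 + c‖
            ≤ ‖(b * z₂ n)^2‖ + ‖c‖ := norm_add_le _ _
          _ ≤ (‖b‖ * D)^2 + ‖c‖ := by
              rw [norm_pow, norm_mul]
              gcongr
              exact hz₂ n
    · exact le_max_of_le_left (hz₂ n)
end

section
/- Let a, b, d, f, c ∈ ℂ with af = bd, a, b ≠ 0, k = d/a = f/b, and a + b k² ≠ 0. Set g = min(|a|,|b|) and M₁ = (|a|+|b| + √((|a|+|b|)² + g²|c|(|a|+|b|)|a+bk²|)) / (g² |a+bk²|). If M > M₁ and an orbit of the coupled system satisfies |z₁(n)| > M and |z₂(n)| > M and |a z₁(n) + b z₂(n)| > gM, then |z₁(n+1)| > 2M or |z₂(n+1)| > 2M. -/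
open Complex

theorem stmt11 (a b d f c k : ℂ) (ha : a ≠ 0) (hb : b ≠ 0)
    (hsing : a * f = b * d) (hk : k = d / a) (hne : a + b * k^2 ≠ 0)
    (g M₁ M : ℝ)
    (hg : g = min (‖a‖) (‖b‖))
    (hM₁ : M₁ = (‖a‖ + ‖b‖ +
        Real.sqrt ((‖a‖ + ‖b‖)^2 +
          g^2 * ‖c‖ * (‖a‖ + ‖b‖) *
            ‖a + b * k^2‖)) /
      (g^2 * ‖a + b * k^2‖))
    (hM : M > M₁)
    (z₁ z₂ : ℕ → ℂ)
    (h₁ : ∀ m, z₁ (m+1) = (a * z₁ m + b * z₂ m)^2 + c)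
    (h₂ : ∀ m, z₂ (m+1) = (d * z₁ m + f * z₂ m)^2 + c)
    (n : ℕ)
    (hz₁ : ‖z₁ n‖ > M) (hz₂ : ‖z₂ n‖ > M)
    (hcomb : ‖a * z₁ n + b * z₂ n‖ > g * M) :
    ‖z₁ (n+1)‖ > 2*M ∨ ‖z₂ (n+1)‖ > 2*M := by
  set A := ‖a‖ + ‖b‖ with hA
  set B := ‖a + b * k^2‖ with hB
  have ha' : ‖a‖ > 0 := norm_pos_iff.mpr ha
  have hb' : ‖b‖ > 0 := norm_pos_iff.mpr hb
  have hg0 : g > 0 := by rw [hg]; exact lt_min ha' hb'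
  have hA0 : A > 0 := by positivity
  have hB0 : B > 0 := norm_pos_iff.mpr hne
  -- d = a*k, f = b*k
  have hd : d = a * k := by rw [hk]; field_simp
  have hf : f = b * k := by
    have : a * f = a * (b * k) := by rw [hsing, hd]; ring
    exact mul_left_cancel₀ ha this
  -- algebra: M > M₁ gives g^2*B*M^2 > 2*A*M + |c|*A
  set s := Real.sqrt (A^2 + g^2 * ‖c‖ * A * B) with hs
  have hs0 : s ≥ 0 := Real.sqrt_nonneg _
  have hs2 : s^2 = A^2 + g^2 * ‖c‖ * A * B := by
    rw [hs, Real.sq_sqrt]; positivity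
  have hMgt : g^2 * B * M > A + s := by
    have h1 : M > (A + s) / (g^2 * B) := by rw [hM₁] at hM; exact hM
    have h2 : (0:ℝ) < g^2 * B := by positivity
    calc g^2 * B * M > g^2 * B * ((A + s) / (g^2 * B)) := by
          exact (mul_lt_mul_iff_right₀ h2).mpr h1
      _ = A + s := by field_simp
  have hgB : (0:ℝ) < g^2 * B := by positivity
  have hM0 : M > 0 := by nlinarith [hgB, hA0, hs0, hMgt]
  have hkey : g^2 * B * M^2 > 2 * A * M + ‖c‖ * A := by
    have hca : ‖c‖ ≥ 0 := norm_nonneg _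
    have hp : (0:ℝ) < (g^2 * B * M - A - s) * (g^2 * B * M - A + s) :=
      mul_pos (by linarith) (by linarith)
    nlinarith [hp, hs2, hgB, mul_pos hgB hM0]
  -- the combination
  set w := a * z₁ n + b * z₂ n with hw
  have hcombM : ‖w‖ > g * M := hcomb
  have heq : a * z₁ (n+1) + b * z₂ (n+1) = (a + b * k^2) * w^2 + (a + b) * c := by
    rw [h₁, h₂, hd, hf, hw]; ring
  have hwl : ‖(a + b * k^2) * w^2‖ ≥ B * (g*M)^2 := by
    rw [norm_mul, norm_pow]
    have h4 : (g*M)^2 ≤ ‖w‖ ^ 2 := by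
      have hgm : (0:ℝ) ≤ g*M := by positivity
      exact pow_le_pow_left₀ hgm hcombM.le 2
    exact mul_le_mul_of_nonneg_left h4 hB0.le
  have habc : ‖(a + b) * c‖ ≤ A * ‖c‖ := by
    rw [norm_mul]
    have : ‖a + b‖ ≤ A := norm_add_le a b
    nlinarith [norm_nonneg c]
  have hbig : ‖a * z₁ (n+1) + b * z₂ (n+1)‖ > 2 * A * M := by
    have h3 : ‖(a + b * k^2) * w^2 + (a + b) * c‖ ≥
        ‖(a + b * k^2) * w^2‖ - ‖(a + b) * c‖ := by
      have h6 := norm_add_le ((a + b * k^2) * w^2 + (a + b) * c) (-((a + b) * c))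
      simp only [norm_neg] at h6
      have h7 : (a + b * k^2) * w^2 + (a + b) * c + -((a + b) * c) = (a + b * k^2) * w^2 := by ring
      rw [h7] at h6
      linarith
    rw [heq]
    have h5 : B * (g*M)^2 = g^2 * B * M^2 := by ring
    linarith
  by_contra hcon
  push_neg at hcon
  obtain ⟨hc1, hc2⟩ := hcon
  have : ‖a * z₁ (n+1) + b * z₂ (n+1)‖ ≤ 2 * A * M := by
    calc ‖a * z₁ (n+1) + b * z₂ (n+1)‖
        ≤ ‖a * z₁ (n+1)‖ + ‖b * z₂ (n+1)‖ :=
          norm_add_le _ _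
      _ = ‖a‖ * ‖z₁ (n+1)‖ +
          ‖b‖ * ‖z₂ (n+1)‖ := by rw [norm_mul, norm_mul]
      _ ≤ ‖a‖ * (2*M) + ‖b‖ * (2*M) := by
          gcongr
      _ = 2 * A * M := by rw [hA]; ring
  linarith
end

section
/- Let a, d, f, c ∈ ℂ and consider the semi-coupled system z₁(n+1) = (a z₁(n))² + c, z₂(n+1) = (d z₁(n) + f z₂(n))² + c with initial condition (0,0). Suppose |z₁(n)| ≤ M for all n. If 4M|fd| + 4|f|²|c| < 1, then the sequence z₂(n) is bounded; explicitly, z₂(n) is bounded by any K with max(X₁, 0) < K < X₂, where X₁ ≤ X₂ are the roots of h(X) = |f|²X² + (2M|df| − 1)X + M²|d|² + |c|. -/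
open Complex

lemma key12 (d f c : ℂ) (M : ℝ) (z₁ z₂ : ℕ → ℂ)
    (h₂0 : z₂ 0 = 0)
    (h₂ : ∀ n, z₂ (n+1) = (d * z₁ n + f * z₂ n)^2 + c)
    (hbound : ∀ n, ‖z₁ n‖ ≤ M)
    (K : ℝ) (hK0 : 0 ≤ K)
    (hh : (‖f‖)^2 * K^2 + (2 * M * ‖d * f‖ - 1) * K +
        M^2 * (‖d‖)^2 + ‖c‖ ≤ 0) :
    ∀ n, ‖z₂ n‖ ≤ K := by
  have hdf : ‖d * f‖ = ‖d‖ * ‖f‖ := norm_mul _ _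
  rw [hdf] at hh
  intro n
  induction n with
  | zero => simpa [h₂0] using hK0
  | succ n ih =>
    rw [h₂ n]
    have hM : 0 ≤ M := le_trans (norm_nonneg _) (hbound 0)
    have h1 : ‖(d * z₁ n + f * z₂ n)^2 + c‖ ≤
        ‖d * z₁ n + f * z₂ n‖^2 + ‖c‖ := by
      refine le_trans (norm_add_le _ _) ?_
      simp [norm_pow]
    have h2 : ‖d * z₁ n + f * z₂ n‖ ≤
        ‖d‖ * M + ‖f‖ * K := by
      refine le_trans (norm_add_le _ _) ?_
      rw [norm_mul, norm_mul]
      exact add_le_add (mul_le_mul_of_nonneg_left (hbound n) (norm_nonneg d))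
        (mul_le_mul_of_nonneg_left ih (norm_nonneg f))
    have h3 : ‖d * z₁ n + f * z₂ n‖^2 ≤
        (‖d‖ * M + ‖f‖ * K)^2 := by
      apply sq_le_sq' _ h2
      nlinarith [norm_nonneg (d * z₁ n + f * z₂ n)]
    nlinarith [h1, h3]

theorem stmt12 (a d f c : ℂ) (M : ℝ) (z₁ z₂ : ℕ → ℂ)
    (h₁0 : z₁ 0 = 0) (h₂0 : z₂ 0 = 0)
    (h₁ : ∀ n, z₁ (n+1) = (a * z₁ n)^2 + c)
    (h₂ : ∀ n, z₂ (n+1) = (d * z₁ n + f * z₂ n)^2 + c)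
    (hbound : ∀ n, ‖z₁ n‖ ≤ M)
    (hsmall : 4 * M * ‖f * d‖ + 4 * (‖f‖)^2 * ‖c‖ < 1) :
    (∃ B : ℝ, ∀ n, ‖z₂ n‖ ≤ B) ∧
    ∀ X₁ X₂ : ℝ, X₁ ≤ X₂ →
      (‖f‖)^2 * X₁^2 + (2 * M * ‖d * f‖ - 1) * X₁ +
        M^2 * (‖d‖)^2 + ‖c‖ = 0 →
      (‖f‖)^2 * X₂^2 + (2 * M * ‖d * f‖ - 1) * X₂ +
        M^2 * (‖d‖)^2 + ‖c‖ = 0 →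
      ∀ K : ℝ, max X₁ 0 < K → K < X₂ → ∀ n, ‖z₂ n‖ ≤ K := by
  have hM : 0 ≤ M := le_trans (norm_nonneg _) (hbound 0)
  have hfd : ‖f * d‖ = ‖f‖ * ‖d‖ := norm_mul _ _
  have hdf : ‖d * f‖ = ‖d‖ * ‖f‖ := norm_mul _ _
  rw [hfd] at hsmall
  constructor
  · by_cases hf : ‖f‖ = 0
    · refine ⟨M^2 * (‖d‖)^2 + ‖c‖, ?_⟩
      apply key12 d f c M z₁ z₂ h₂0 h₂ hbound
      · positivity
      · rw [hdf, hf]; nlinarith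
    · have hf' : 0 < ‖f‖ := lt_of_le_of_ne (norm_nonneg f) (Ne.symm hf)
      set K := (1 - 2 * M * (‖d‖ * ‖f‖)) / (2 * (‖f‖)^2) with hK
      refine ⟨K, key12 d f c M z₁ z₂ h₂0 h₂ hbound K ?_ ?_⟩
      · apply div_nonneg _ (by positivity)
        nlinarith [norm_nonneg c, mul_nonneg (mul_nonneg hM (norm_nonneg f)) (norm_nonneg d)]
      · rw [hdf]
        have hKeq : 2 * (‖f‖)^2 * K = 1 - 2 * M * (‖d‖ * ‖f‖) := by
          rw [hK]; field_simp
        have hK2 : (2 * (‖f‖)^2 * K)^2 =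
            (1 - 2 * M * (‖d‖ * ‖f‖))^2 := by rw [hKeq]
        have hK3 : 2 * (‖f‖)^2 * K * (2 * M * (‖d‖ * ‖f‖) - 1) =
            (1 - 2 * M * (‖d‖ * ‖f‖)) *
              (2 * M * (‖d‖ * ‖f‖) - 1) := by rw [hKeq]
        have h4 : (0:ℝ) < 4 * (‖f‖)^2 := by positivity
        nlinarith [hK2, hK3, hsmall, h4, mul_pos h4 hf']
  · intro X₁ X₂ hle hX₁ hX₂ K hK1 hK2
    have hK1' : X₁ < K := lt_of_le_of_lt (le_max_left _ _) hK1
    have hK0 : 0 < K := lt_of_le_of_lt (le_max_right _ _) hK1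
    apply key12 d f c M z₁ z₂ h₂0 h₂ hbound K hK0.le
    by_cases hf : ‖f‖ = 0
    · exfalso
      rw [hdf, hf] at hX₁ hX₂
      have : X₁ = X₂ := by nlinarith
      linarith
    · have hf' : 0 < (‖f‖)^2 := by positivity
      nlinarith [mul_pos (sub_pos.2 hK1') (sub_pos.2 hK2), sq_nonneg (X₂ - X₁),
        mul_pos hf' (mul_pos (sub_pos.2 hK1') (sub_pos.2 hK2)), hX₁, hX₂]
end

section
/- Let a, b, d, f, c ∈ ℂ with af = bd, a, b ≠ 0, k = d/a = f/b. For an orbit of the system z₁(n+1) = (a z₁ + b z₂)² + c, z₂(n+1) = (d z₁ + f z₂)² + c, define ξ(n) = a z₁(n) + b z₂(n). Then ξ satisfies the recursion ξ(n+1) = (a + bk²) ξ(n)² + (a+b)c, and with η(n) = (a + bk²) ξ(n) (assuming a + bk² ≠ 0) one gets η(n+1) = η(n)² + (a + bk²)(a+b)c. Consequently, the pair (z₁(n), z₂(n)) is bounded if and only if η(n) is a bounded orbit of w ↦ w² + (a+bk²)(a+b)c; starting from (z₁(0),z₂(0)) = (0,0), boundedness holds if and only if (a+bk²)(a+b)c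 lies in the Mandelbrot set. -/
open Complex

theorem stmt15 (a b d f c k : ℂ) (ha : a ≠ 0) (hb : b ≠ 0)
    (hdk : d = k * a) (hfk : f = k * b) (hne : a + b * k^2 ≠ 0)
    (z₁ z₂ : ℕ → ℂ)
    (h₁ : ∀ n, z₁ (n+1) = (a * z₁ n + b * z₂ n)^2 + c)
    (h₂ : ∀ n, z₂ (n+1) = (d * z₁ n + f * z₂ n)^2 + c)
    (ξ η : ℕ → ℂ)
    (hξ : ∀ n, ξ n = a * z₁ n + b * z₂ n)
    (hη : ∀ n, η n = (a + b * k^2) * ξ n) :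
    (∀ n, ξ (n+1) = (a + b * k^2) * (ξ n)^2 + (a + b) * c) ∧
    (∀ n, η (n+1) = (η n)^2 + (a + b * k^2) * (a + b) * c) ∧
    ((∃ B : ℝ, ∀ n, ‖z₁ n‖ ≤ B ∧ ‖z₂ n‖ ≤ B) ↔
      (∃ B : ℝ, ∀ n, ‖η n‖ ≤ B)) ∧
    (z₁ 0 = 0 → z₂ 0 = 0 →
      ((∃ B : ℝ, ∀ n, ‖z₁ n‖ ≤ B ∧ ‖z₂ n‖ ≤ B) ↔
        (a + b * k^2) * (a + b) * c ∈ mandelbrotSet)) := by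
  have key : ∀ n, ξ (n+1) = (a + b * k^2) * (ξ n)^2 + (a + b) * c := by
    intro n
    have hd : d * z₁ n + f * z₂ n = k * ξ n := by rw [hξ, hdk, hfk]; ring
    rw [hξ, h₁, h₂, hd, hξ]; ring
  have keyη : ∀ n, η (n+1) = (η n)^2 + (a + b * k^2) * (a + b) * c := by
    intro n
    rw [hη, key, hη]; ring
  have hKpos : 0 < ‖a + b * k^2‖ := by
    simpa using norm_pos_iff.mpr hne
  have part3 : (∃ B : ℝ, ∀ n, ‖z₁ n‖ ≤ B ∧ ‖z₂ n‖ ≤ B) ↔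
      (∃ B : ℝ, ∀ n, ‖η n‖ ≤ B) := by
    constructor
    · rintro ⟨B, hB⟩
      refine ⟨‖a + b * k^2‖ * (‖a‖ * B + ‖b‖ * B),
        fun n => ?_⟩
      have h1 := (hB n).1
      have h2 := (hB n).2
      rw [hη, hξ, norm_mul]
      have htri : ‖a * z₁ n + b * z₂ n‖ ≤
          ‖a‖ * ‖z₁ n‖ + ‖b‖ * ‖z₂ n‖ := by
        calc ‖a * z₁ n + b * z₂ n‖
            ≤ ‖a * z₁ n‖ + ‖b * z₂ n‖ := norm_add_le _ _
          _ = _ := by rw [norm_mul, norm_mul]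
      have h' : ‖a‖ * ‖z₁ n‖ + ‖b‖ * ‖z₂ n‖
          ≤ ‖a‖ * B + ‖b‖ * B := by
        gcongr <;> positivity
      exact mul_le_mul_of_nonneg_left (htri.trans h') (norm_nonneg _)
    · rintro ⟨B, hB⟩
      set Bξ : ℝ := B / ‖a + b * k^2‖ with hBξdef
      have hBξ : ∀ n, ‖ξ n‖ ≤ Bξ := by
        intro n
        have : ‖η n‖ = ‖a + b * k^2‖ * ‖ξ n‖ := by
          rw [hη, norm_mul]
        rw [hBξdef, le_div_iff₀ hKpos, mul_comm]
        rw [← this]; exact hB n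
      have hBξ0 : 0 ≤ Bξ := le_trans (norm_nonneg _) (hBξ 0)
      refine ⟨max (max (‖z₁ 0‖) (‖z₂ 0‖))
        ((1 + ‖k‖ ^ 2) * Bξ ^ 2 + ‖c‖), fun n => ?_⟩
      cases n with
      | zero =>
        constructor
        · exact le_max_of_le_left (le_max_left _ _)
        · exact le_max_of_le_left (le_max_right _ _)
      | succ m =>
        have hz1 : z₁ (m+1) = (ξ m)^2 + c := by rw [h₁, ← hξ]
        have hz2 : z₂ (m+1) = (k * ξ m)^2 + c := by
          rw [h₂, hdk, hfk, hξ]; ring_nf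
        have hξm := hBξ m
        constructor
        · refine le_max_of_le_right ?_
          rw [hz1]
          calc ‖(ξ m)^2 + c‖ ≤ ‖(ξ m)^2‖ + ‖c‖ :=
                norm_add_le _ _
            _ = ‖ξ m‖ ^ 2 + ‖c‖ := by rw [norm_pow]
            _ ≤ (1 + ‖k‖ ^ 2) * Bξ ^ 2 + ‖c‖ := by
                have : ‖ξ m‖ ^ 2 ≤ Bξ ^ 2 := by
                  gcongr
                nlinarith [sq_nonneg (‖k‖), sq_nonneg Bξ]
        · refine le_max_of_le_right ?_
          rw [hz2]
          calc ‖(k * ξ m)^2 + c‖ ≤ ‖(k * ξ m)^2‖ + ‖c‖ :=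
                norm_add_le _ _
            _ = ‖k‖ ^ 2 * ‖ξ m‖ ^ 2 + ‖c‖ := by
                rw [norm_pow, norm_mul]; ring
            _ ≤ (1 + ‖k‖ ^ 2) * Bξ ^ 2 + ‖c‖ := by
                have : ‖ξ m‖ ^ 2 ≤ Bξ ^ 2 := by
                  gcongr
                nlinarith [sq_nonneg (‖k‖), sq_nonneg Bξ]
  refine ⟨key, keyη, part3, fun hz10 hz20 => ?_⟩
  have horb : ∀ n, η n = mandelbrotOrbit ((a + b * k^2) * (a + b) * c) n := by
    intro n
    induction n with
    | zero => rw [hη, hξ, hz10, hz20]; simp [mandelbrotOrbit]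
    | succ m ih => rw [keyη, ih, mandelbrotOrbit]
  rw [part3]
  constructor
  · rintro ⟨B, hB⟩
    exact ⟨B, fun n => by rw [← horb]; exact hB n⟩
  · rintro ⟨B, hB⟩
    exact ⟨B, fun n => by rw [horb]; exact hB n⟩
end
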